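/- Let n ≥ 1, let Ω ⊆ ℝⁿ be a bounded open set, let μ and ν be Borel probability measures on ℝⁿ, absolutely continuous with respect to Lebesgue measure, with spt μ ⊆ Ω, and let u be a Brenier solution on Ω pushing μ forward to ν. If x₀ ∈ int(spt μ) is an isolated singular point of u, then the frontier of the subdifferential ∂u(x₀) is contained in spt ν. -/

import Mathlib

open MeasureTheory Set Metric RealInnerProductSpace

noncomputable section

/-- The (global) subdifferential of `u : Ω → ℝ` at `x`:
`∂u(x) = {p | ∀ y ∈ Ω, u y ≥ u x + ⟨p, y - x⟩}`. -/
def subdiff {n : ℕ} (Ω : Set (EuclideanSpace ℝ (Fin n))) (u : EuclideanSpace ℝ (Fin n) → ℝ)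
    (x : EuclideanSpace ℝ (Fin n)) : Set (EuclideanSpace ℝ (Fin n)) :=
  {p | ∀ y ∈ Ω, u x + ⟪p, y - x⟫ ≤ u y}

/-- The support of a Borel measure: points all of whose open neighborhoods have
positive measure. -/
def msupport {n : ℕ} (μ : Measure (EuclideanSpace ℝ (Fin n))) :
    Set (EuclideanSpace ℝ (Fin n)) :=
  {x | ∀ U : Set (EuclideanSpace ℝ (Fin n)), IsOpen U → x ∈ U → μ U ≠ 0}

/-- A Brenier solution on `Ω` pushing `μ` forward to `ν`: a convex function `u` on `Ω`
(expressed by the existence of a global supporting affine function at each point of `Ω`),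
with `spt μ ⊆ Ω`, whose gradient map pushes `μ` forward to `ν` and maps points of
differentiability in `spt μ` into `spt ν`. -/
structure IsBrenierSol {n : ℕ} (Ω : Set (EuclideanSpace ℝ (Fin n)))
    (μ ν : Measure (EuclideanSpace ℝ (Fin n))) (u : EuclideanSpace ℝ (Fin n) → ℝ) : Prop where
  convex : ∀ x ∈ Ω, (subdiff Ω u x).Nonempty
  support_subset : msupport μ ⊆ Ω
  map_grad : μ.map (fun x => gradient u x) = ν
  grad_mem_support : ∀ x ∈ msupport μ, DifferentiableAt ℝ u x → gradient u x ∈ msupport ν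

/-- `x₀` is an isolated singular point of `u` (as a function on `Ω`): `u` is not
differentiable at `x₀`, but is differentiable on `N \ {x₀}` for some open
neighborhood `N ⊆ Ω` of `x₀`. -/
def IsIsolatedSingPt {n : ℕ} (Ω : Set (EuclideanSpace ℝ (Fin n)))
    (u : EuclideanSpace ℝ (Fin n) → ℝ) (x₀ : EuclideanSpace ℝ (Fin n)) : Prop :=
  x₀ ∈ Ω ∧ ¬ DifferentiableAt ℝ u x₀ ∧
    ∃ N : Set (EuclideanSpace ℝ (Fin n)), N ⊆ Ω ∧ IsOpen N ∧ x₀ ∈ N ∧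
      ∀ x ∈ N \ {x₀}, DifferentiableAt ℝ u x

/-- `O` is a hole in `A`: a nonempty bounded open connected set disjoint from the interior
of `A` whose frontier is contained in the frontier of `A`. -/
def IsHole {n : ℕ} (A O : Set (EuclideanSpace ℝ (Fin n))) : Prop :=
  O.Nonempty ∧ IsOpen O ∧ IsConnected O ∧ Bornology.IsBounded O ∧
    O ∩ interior A = ∅ ∧ frontier O ⊆ frontier A

section Aux

variable {n : ℕ} {Ω : Set (EuclideanSpace ℝ (Fin n))} {u : EuclideanSpace ℝ (Fin n) → ℝ}
  {x y p q : EuclideanSpace ℝ (Fin n)}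

lemma aux_isClosed_subdiff : IsClosed (subdiff Ω u x) := by
  have h : subdiff Ω u x
      = ⋂ y ∈ Ω, {p : EuclideanSpace ℝ (Fin n) | u x + ⟪p, y - x⟫ ≤ u y} := by
    ext p; simp [subdiff]
  rw [h]
  exact isClosed_biInter fun y _ =>
    isClosed_le (continuous_const.add (continuous_id.inner continuous_const)) continuous_const

lemma aux_convex_subdiff : Convex ℝ (subdiff Ω u x) := by
  intro p hp q hq a b ha hb hab
  intro y hy
  have h1 := hp y hy
  have h2 := hq y hy
  have hin : ⟪a • p + b • q, y - x⟫ = a * ⟪p, y - x⟫ + b * ⟪q, y - x⟫ := by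
    rw [inner_add_left, real_inner_smul_left, real_inner_smul_left]
  have e1 : a * u x + b * u x = u x := by rw [← add_mul, hab, one_mul]
  have e2 : a * u y + b * u y = u y := by rw [← add_mul, hab, one_mul]
  have t1 := mul_le_mul_of_nonneg_left h1 ha
  have t2 := mul_le_mul_of_nonneg_left h2 hb
  rw [mul_add] at t1 t2
  linarith [hin]

lemma aux_isClosed_msupport (ν : Measure (EuclideanSpace ℝ (Fin n))) :
    IsClosed (msupport ν) := by
  rw [← isOpen_compl_iff]
  refine isOpen_iff_forall_mem_open.2 fun x hx => ?_
  simp only [msupport, mem_compl_iff, mem_setOf_eq] at hx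
  push_neg at hx
  obtain ⟨U, hUo, hxU, hU0⟩ := hx
  exact ⟨U, fun z hz h => h U hUo hz hU0, hUo, hxU⟩

lemma aux_convexOn {C : Set (EuclideanSpace ℝ (Fin n))} (hC : Convex ℝ C) (hCΩ : C ⊆ Ω)
    (hsub : ∀ x ∈ Ω, (subdiff Ω u x).Nonempty) : ConvexOn ℝ C u := by
  refine ⟨hC, fun x hx y hy a b ha hb hab => ?_⟩
  set z := a • x + b • y with hz
  have hzC : z ∈ C := hC hx hy ha hb hab
  obtain ⟨qz, hqz⟩ := hsub z (hCΩ hzC)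
  have h1 := hqz x (hCΩ hx)
  have h2 := hqz y (hCΩ hy)
  have key : a * ⟪qz, x - z⟫ + b * ⟪qz, y - z⟫ = 0 := by
    rw [← real_inner_smul_right, ← real_inner_smul_right, ← inner_add_right]
    have hv : a • (x - z) + b • (y - z) = 0 := by
      have hb' : b = 1 - a := by linarith
      rw [hz, hb']; module
    rw [hv, inner_zero_right]
  have e1 : a * u z + b * u z = u z := by rw [← add_mul, hab, one_mul]
  have t1 := mul_le_mul_of_nonneg_left h1 ha
  have t2 := mul_le_mul_of_nonneg_left h2 hb
  rw [mul_add] at t1 t2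
  simp only [smul_eq_mul]
  linarith

lemma aux_grad_eq_of_localMin (hd : DifferentiableAt ℝ u y)
    (hmin : IsLocalMin (fun z => u z - ⟪p, z⟫) y) : gradient u y = p := by
  have hfun : (fun z : EuclideanSpace ℝ (Fin n) => ⟪p, z⟫)
      = ⇑(InnerProductSpace.toDual ℝ (EuclideanSpace ℝ (Fin n)) p) :=
    funext fun z => (InnerProductSpace.toDual_apply_apply).symm
  have hp : HasFDerivAt (fun z : EuclideanSpace ℝ (Fin n) => ⟪p, z⟫)
      ((InnerProductSpace.toDual ℝ (EuclideanSpace ℝ (Fin n)) p) : _ →L[ℝ] ℝ) y := by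
    rw [hfun]
    exact (InnerProductSpace.toDual ℝ (EuclideanSpace ℝ (Fin n)) p).hasFDerivAt
  have hf := hd.hasFDerivAt.sub hp
  have h0 := hmin.hasFDerivAt_eq_zero hf
  rw [sub_eq_zero] at h0
  rw [gradient, h0, LinearIsometryEquiv.symm_apply_apply]

lemma aux_localMin_of_subdiff (hΩo : IsOpen Ω) (hy : y ∈ Ω) (hq : q ∈ subdiff Ω u y) :
    IsLocalMin (fun z => u z - ⟪q, z⟫) y := by
  filter_upwards [hΩo.mem_nhds hy] with z hz
  have h := hq z hz
  rw [inner_sub_right] at h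
  show u y - ⟪q, y⟫ ≤ u z - ⟪q, z⟫
  linarith

lemma aux_subdiff_eq_grad (hΩo : IsOpen Ω) (hy : y ∈ Ω) (hd : DifferentiableAt ℝ u y)
    (hq : q ∈ subdiff Ω u y) : q = gradient u y :=
  (aux_grad_eq_of_localMin hd (aux_localMin_of_subdiff hΩo hy hq)).symm

lemma aux_grad_mem_subdiff (hΩo : IsOpen Ω) (hy : y ∈ Ω) (hd : DifferentiableAt ℝ u y)
    (hsub : ∀ x ∈ Ω, (subdiff Ω u x).Nonempty) : gradient u y ∈ subdiff Ω u y := by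
  obtain ⟨q, hq⟩ := hsub y hy
  rwa [aux_subdiff_eq_grad hΩo hy hd hq] at hq

end Aux

set_option maxHeartbeats 1000000 in
/-- **Frontier of the subdifferential at an isolated singularity lies in `spt ν`.**
(Euclidean case of equation (3.1) of the paper.) -/
theorem frontier_subdiff_subset_support
    (n : ℕ) (hn : 1 ≤ n)
    (Ω : Set (EuclideanSpace ℝ (Fin n)))
    (hΩo : IsOpen Ω) (hΩb : Bornology.IsBounded Ω)
    (μ ν : Measure (EuclideanSpace ℝ (Fin n)))
    (hμp : IsProbabilityMeasure μ) (hνp : IsProbabilityMeasure ν)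
    (hμac : μ ≪ volume) (hνac : ν ≪ volume)
    (hμs : msupport μ ⊆ Ω)
    (u : EuclideanSpace ℝ (Fin n) → ℝ) (hu : IsBrenierSol Ω μ ν u)
    (x₀ : EuclideanSpace ℝ (Fin n)) (hx₀ : x₀ ∈ interior (msupport μ))
    (hsing : IsIsolatedSingPt Ω u x₀) :
    frontier (subdiff Ω u x₀) ⊆ msupport ν := by
  obtain ⟨hx₀Ω, hx₀nd, N, hNΩ, hNo, hx₀N, hNdiff⟩ := hsing
  obtain ⟨R, hR0, hRsub⟩ : ∃ R > 0, ball x₀ R ⊆ N ∩ interior (msupport μ) := by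
    have ho : IsOpen (N ∩ interior (msupport μ)) := hNo.inter isOpen_interior
    exact Metric.isOpen_iff.1 ho x₀ ⟨hx₀N, hx₀⟩
  set r := R / 4 with hr
  have hr0 : 0 < r := by positivity
  have hballN : ball x₀ R ⊆ N := fun z hz => (hRsub hz).1
  have hballsupp : ball x₀ R ⊆ msupport μ := fun z hz => interior_subset (hRsub hz).2
  have hballΩ : ball x₀ R ⊆ Ω := hballN.trans hNΩ
  have h3r : closedBall x₀ (3 * r) ⊆ ball x₀ R := closedBall_subset_ball (by rw [hr]; linarith)
  have h2r3 : closedBall x₀ (2 * r) ⊆ closedBall x₀ (3 * r) :=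
    closedBall_subset_closedBall (by linarith)
  have hr2 : closedBall x₀ r ⊆ closedBall x₀ (2 * r) := closedBall_subset_closedBall (by linarith)
  have hrR : closedBall x₀ r ⊆ ball x₀ R := (hr2.trans h2r3).trans h3r
  have hconv : ConvexOn ℝ (ball x₀ R) u := aux_convexOn (convex_ball _ _) hballΩ hu.convex
  have hcont : ContinuousOn u (ball x₀ R) := hconv.continuousOn isOpen_ball
  set S := subdiff Ω u x₀ with hSdef
  intro p hp
  have hpS : p ∈ S := by
    have h := frontier_subset_closure hp
    rwa [aux_isClosed_subdiff.closure_eq] at h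
  have hpcl : p ∈ closure Sᶜ := by
    rw [frontier_eq_closure_inter_closure] at hp; exact hp.2
  obtain ⟨q₀, hq₀⟩ := hu.convex x₀ hx₀Ω
  -- maximum of u on the closed ball of radius 3r
  obtain ⟨zM, hzMmem, hzM⟩ := (isCompact_closedBall x₀ (3 * r)).exists_isMaxOn
      ⟨x₀, mem_closedBall_self (by linarith)⟩ (hcont.mono h3r)
  set M := u zM with hM
  have hxM : u x₀ ≤ M := (isMaxOn_iff.1 hzM) x₀ (mem_closedBall_self (by linarith))
  set Cb := (M - u x₀ + 2 * r * ‖q₀‖) / r with hCb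
  have hCb0 : 0 ≤ Cb := by
    apply div_nonneg _ hr0.le
    nlinarith [norm_nonneg q₀]
  -- gradient bound
  have hgb : ∀ z ∈ closedBall x₀ (2 * r), DifferentiableAt ℝ u z → ‖gradient u z‖ ≤ Cb := by
    intro z hz hdz
    have hzΩ : z ∈ Ω := hballΩ (h3r (h2r3 hz))
    have hg : gradient u z ∈ subdiff Ω u z := aux_grad_mem_subdiff hΩo hzΩ hdz hu.convex
    set g := gradient u z with hgdef
    by_cases hg0 : g = 0
    · rw [hg0, norm_zero]; exact hCb0
    · have hgn : 0 < ‖g‖ := norm_pos_iff.2 hg0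
      set w := z + r • (‖g‖⁻¹ • g) with hw
      have hwnorm : ‖w - z‖ = r := by
        rw [hw, add_sub_cancel_left, norm_smul, norm_smul, norm_inv, norm_norm,
          Real.norm_eq_abs, abs_of_pos hr0]
        field_simp
      have hwball : w ∈ closedBall x₀ (3 * r) := by
        rw [mem_closedBall_iff_norm]
        have : w - x₀ = (w - z) + (z - x₀) := by abel
        rw [this]
        have hzx : ‖z - x₀‖ ≤ 2 * r := mem_closedBall_iff_norm.1 hz
        calc ‖(w - z) + (z - x₀)‖ ≤ ‖w - z‖ + ‖z - x₀‖ := norm_add_le _ _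
          _ ≤ r + 2 * r := by rw [hwnorm]; linarith
          _ = 3 * r := by ring
      have h1 := hg w (hballΩ (h3r hwball))
      have hinner : ⟪g, w - z⟫ = r * ‖g‖ := by
        have hwz : w - z = r • (‖g‖⁻¹ • g) := by rw [hw]; abel
        rw [hwz, real_inner_smul_right, real_inner_smul_right,
          real_inner_self_eq_norm_mul_norm]
        field_simp
      have h2 : u w ≤ M := (isMaxOn_iff.1 hzM) w hwball
      have h3 : u x₀ + ⟪q₀, z - x₀⟫ ≤ u z := hq₀ z hzΩ
      have h4 : -(‖q₀‖ * (2 * r)) ≤ ⟪q₀, z - x₀⟫ := by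
        have ha := abs_real_inner_le_norm q₀ (z - x₀)
        have hzx : ‖z - x₀‖ ≤ 2 * r := mem_closedBall_iff_norm.1 hz
        have := neg_abs_le (⟪q₀, z - x₀⟫)
        nlinarith [norm_nonneg q₀]
      rw [hCb, le_div_iff₀ hr0]
      rw [hinner] at h1
      nlinarith
  -- local subgradients are global
  have hloc : ∀ q : EuclideanSpace ℝ (Fin n),
      (∀ z ∈ closedBall x₀ r, u x₀ + ⟪q, z - x₀⟫ ≤ u z) → q ∈ S := by
    intro q hq
    by_contra hqS
    obtain ⟨f, c, hfS, hfq⟩ :=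
      geometric_hahn_banach_closed_point (aux_convex_subdiff) (aux_isClosed_subdiff) hqS
    set v := (InnerProductSpace.toDual ℝ (EuclideanSpace ℝ (Fin n))).symm f with hvdef
    have hfv : ∀ w : EuclideanSpace ℝ (Fin n), ⟪v, w⟫ = f w := fun w =>
      InnerProductSpace.toDual_symm_apply
    have hv0 : v ≠ 0 := by
      intro h
      have e1 : f q₀ = 0 := by rw [← hfv, h, inner_zero_left]
      have e2 : f q = 0 := by rw [← hfv, h, inner_zero_left]
      have := hfS q₀ hq₀
      linarith
    have hvn : 0 < ‖v‖ := norm_pos_iff.2 hv0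
    set t : ℕ → ℝ := fun k => r / ‖v‖ * (1 / (k + 1)) with ht
    have ht0 : ∀ k, 0 < t k := fun k => by positivity
    set yk : ℕ → EuclideanSpace ℝ (Fin n) := fun k => x₀ + t k • v with hyk
    have hykx : ∀ k, yk k - x₀ = t k • v := fun k => by
      rw [hyk]; exact add_sub_cancel_left _ _
    have hyknorm : ∀ k, ‖yk k - x₀‖ ≤ r := by
      intro k
      rw [hykx, norm_smul, Real.norm_eq_abs, abs_of_pos (ht0 k)]
      have e : t k * ‖v‖ = r / ((k : ℝ) + 1) := by
        show r / ‖v‖ * (1 / ((k : ℝ) + 1)) * ‖v‖ = r / ((k : ℝ) + 1)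
        field_simp
      rw [e, div_le_iff₀ (by positivity : (0:ℝ) < (k : ℝ) + 1)]
      nlinarith [Nat.cast_nonneg (α := ℝ) k]
    have hykcb : ∀ k, yk k ∈ closedBall x₀ r := fun k =>
      mem_closedBall_iff_norm.2 (hyknorm k)
    have hykne : ∀ k, yk k ≠ x₀ := by
      intro k h
      have : t k • v = 0 := by
        have := hykx k
        rw [h, sub_self] at this
        exact this.symm
      rcases smul_eq_zero.1 this with h1 | h2
      · exact (ht0 k).ne' h1
      · exact hv0 h2
    have hykdiff : ∀ k, DifferentiableAt ℝ u (yk k) := fun k =>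
      hNdiff _ ⟨hballN (hrR (hykcb k)), hykne k⟩
    have hykΩ : ∀ k, yk k ∈ Ω := fun k => hballΩ (hrR (hykcb k))
    set gk : ℕ → EuclideanSpace ℝ (Fin n) := fun k => gradient u (yk k) with hgk
    have hgkS : ∀ k, gk k ∈ subdiff Ω u (yk k) := fun k =>
      aux_grad_mem_subdiff hΩo (hykΩ k) (hykdiff k) hu.convex
    have hineq : ∀ k, ⟪q, v⟫ ≤ ⟪gk k, v⟫ := by
      intro k
      have ha := hgkS k x₀ hx₀Ω
      have hb := hq (yk k) (hykcb k)
      rw [hykx, real_inner_smul_right] at hb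
      have hxy : x₀ - yk k = -(t k • v) := by
        rw [← neg_sub, hykx]
      rw [hxy, inner_neg_right, real_inner_smul_right] at ha
      have hmul : t k * ⟪q, v⟫ ≤ t k * ⟪gk k, v⟫ := by linarith
      exact le_of_mul_le_mul_left hmul (ht0 k)
    have hbdd : ∀ k, gk k ∈ closedBall (0 : EuclideanSpace ℝ (Fin n)) Cb := by
      intro k
      rw [mem_closedBall_iff_norm, sub_zero]
      exact hgb _ (hr2 (hykcb k)) (hykdiff k)
    obtain ⟨qs, hqscl, φ, hφmono, hφtend⟩ :=
      tendsto_subseq_of_bounded (isBounded_closedBall (x := (0 : EuclideanSpace ℝ (Fin n)))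
        (r := Cb)) hbdd
    have htt : Filter.Tendsto t Filter.atTop (nhds 0) := by
      have h1 := tendsto_one_div_add_atTop_nhds_zero_nat.const_mul (r / ‖v‖)
      rw [mul_zero] at h1
      exact h1
    have hyt : Filter.Tendsto yk Filter.atTop (nhds x₀) := by
      have h1 : Filter.Tendsto (fun k => t k • v) Filter.atTop (nhds ((0 : ℝ) • v)) :=
        htt.smul_const v
      rw [zero_smul] at h1
      have h2 := (tendsto_const_nhds (x := x₀) (f := Filter.atTop (α := ℕ))).add h1
      rw [add_zero] at h2
      exact h2
    have hyφ : Filter.Tendsto (fun k => yk (φ k)) Filter.atTop (nhds x₀) :=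
      hyt.comp hφmono.tendsto_atTop
    have hgφ : Filter.Tendsto (fun k => gk (φ k)) Filter.atTop (nhds qs) := hφtend
    have hut : Filter.Tendsto (fun k => u (yk (φ k))) Filter.atTop (nhds (u x₀)) := by
      have hca : ContinuousAt u x₀ :=
        hcont.continuousAt (isOpen_ball.mem_nhds (mem_ball_self hR0))
      exact hca.tendsto.comp hyφ
    have hqsS : qs ∈ S := by
      intro z hzΩ'
      have hk : ∀ k, u (yk (φ k)) + ⟪gk (φ k), z - yk (φ k)⟫ ≤ u z := fun k =>
        hgkS (φ k) z hzΩ'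
      have hlim : Filter.Tendsto (fun k => u (yk (φ k)) + ⟪gk (φ k), z - yk (φ k)⟫)
          Filter.atTop (nhds (u x₀ + ⟪qs, z - x₀⟫)) :=
        hut.add (hgφ.inner (tendsto_const_nhds.sub hyφ))
      exact le_of_tendsto hlim (Filter.Eventually.of_forall hk)
    have hc1 : f qs < c := hfS qs hqsS
    have hc2 : c < f qs := by
      have hlim2 : Filter.Tendsto (fun k => ⟪gk (φ k), v⟫) Filter.atTop (nhds ⟪qs, v⟫) :=
        hgφ.inner tendsto_const_nhds
      have hle : ⟪q, v⟫ ≤ ⟪qs, v⟫ :=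
        ge_of_tendsto hlim2 (Filter.Eventually.of_forall fun k => hineq (φ k))
      have e1 : ⟪qs, v⟫ = f qs := by rw [real_inner_comm]; exact hfv qs
      have e2 : ⟪q, v⟫ = f q := by rw [real_inner_comm]; exact hfv q
      linarith
    linarith
  -- main epsilon-approximation argument
  have hmain : ∀ ε > 0, ∃ q' ∈ msupport ν, dist p q' < ε := by
    intro ε hε
    by_cases hcase : ∃ z ∈ closedBall x₀ r, z ≠ x₀ ∧ u z = u x₀ + ⟪p, z - x₀⟫
    · obtain ⟨z, hzcb, hzne, hzeq⟩ := hcase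
      have hzΩ : z ∈ Ω := hballΩ (hrR hzcb)
      have hzdiff : DifferentiableAt ℝ u z := hNdiff z ⟨hballN (hrR hzcb), hzne⟩
      have hpz : p ∈ subdiff Ω u z := by
        intro w hw
        have h1 := hpS w hw
        have hadd : ⟪p, z - x₀⟫ + ⟪p, w - z⟫ = ⟪p, w - x₀⟫ := by
          rw [← inner_add_right]
          congr 1
          abel
        rw [hzeq]
        linarith
      have hpg : p = gradient u z := aux_subdiff_eq_grad hΩo hzΩ hzdiff hpz
      refine ⟨gradient u z, hu.grad_mem_support z (hballsupp (hrR hzcb)) hzdiff, ?_⟩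
      rw [← hpg, dist_self]
      exact hε
    · push_neg at hcase
      have hstrict : ∀ z ∈ closedBall x₀ r, z ≠ x₀ → u x₀ + ⟪p, z - x₀⟫ < u z := by
        intro z hz hzne
        have h1 := hpS z (hballΩ (hrR hz))
        exact lt_of_le_of_ne h1 fun h => (hcase z hz hzne) h.symm
      haveI : Nonempty (Fin n) := ⟨⟨0, hn⟩⟩
      haveI : Nontrivial (EuclideanSpace ℝ (Fin n)) := inferInstance
      have hsph : (sphere x₀ r).Nonempty := NormedSpace.sphere_nonempty.2 hr0.le
      have hsphsub : sphere x₀ r ⊆ ball x₀ R := sphere_subset_closedBall.trans hrR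
      have hin1 : Continuous (fun z : EuclideanSpace ℝ (Fin n) => ⟪p, z - x₀⟫) :=
        continuous_const.inner (continuous_id.sub continuous_const)
      have hφcont : ContinuousOn (fun z => u z - u x₀ - ⟪p, z - x₀⟫) (sphere x₀ r) :=
        ((hcont.mono hsphsub).sub continuousOn_const).sub hin1.continuousOn
      obtain ⟨ym, hymmem, hym⟩ := (isCompact_sphere x₀ r).exists_isMinOn hsph hφcont
      set m := u ym - u x₀ - ⟪p, ym - x₀⟫ with hm
      have hymcb : ym ∈ closedBall x₀ r := sphere_subset_closedBall hymmem
      have hymne : ym ≠ x₀ := by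
        intro h
        have := mem_sphere_iff_norm.1 hymmem
        rw [h, sub_self, norm_zero] at this
        exact hr0.ne this
      have hm0 : 0 < m := by
        have := hstrict ym hymcb hymne
        rw [hm]
        linarith
      obtain ⟨p', hp'S, hp'dist⟩ : ∃ p', p' ∉ S ∧ dist p p' < min ε (m / (2 * r)) := by
        have hmin0 : 0 < min ε (m / (2 * r)) := lt_min hε (by positivity)
        obtain ⟨p', hp'mem, hd⟩ := Metric.mem_closure_iff.1 hpcl _ hmin0
        exact ⟨p', hp'mem, hd⟩
      have hin2 : Continuous (fun z : EuclideanSpace ℝ (Fin n) => ⟪p', z⟫) :=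
        continuous_const.inner continuous_id
      have hψcont : ContinuousOn (fun z => u z - ⟪p', z⟫) (closedBall x₀ r) :=
        (hcont.mono hrR).sub hin2.continuousOn
      obtain ⟨y', hy'mem, hy'min⟩ := (isCompact_closedBall x₀ r).exists_isMinOn
        ⟨x₀, mem_closedBall_self hr0.le⟩ hψcont
      have hy'm := isMinOn_iff.1 hy'min
      have hy'ne : y' ≠ x₀ := by
        intro h
        apply hp'S
        apply hloc p'
        intro z hz
        have h1 : u y' - ⟪p', y'⟫ ≤ u z - ⟪p', z⟫ := hy'm z hz
        rw [h] at h1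
        rw [inner_sub_right]
        linarith
      have hy'lt : ‖y' - x₀‖ < r := by
        rcases lt_or_eq_of_le (mem_closedBall_iff_norm.1 hy'mem) with h | h
        · exact h
        · exfalso
          have hy'sph : y' ∈ sphere x₀ r := mem_sphere_iff_norm.2 h
          have hmin2 : u ym - u x₀ - ⟪p, ym - x₀⟫ ≤ u y' - u x₀ - ⟪p, y' - x₀⟫ :=
            isMinOn_iff.1 hym y' hy'sph
          have h1 : u y' - ⟪p', y'⟫ ≤ u x₀ - ⟪p', x₀⟫ :=
            hy'm x₀ (mem_closedBall_self hr0.le)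
          have h2 : u y' ≤ u x₀ + ⟪p', y' - x₀⟫ := by
            rw [inner_sub_right]
            linarith
          have h3 : ⟪p', y' - x₀⟫ = ⟪p, y' - x₀⟫ + ⟪p' - p, y' - x₀⟫ := by
            rw [← inner_add_left]
            congr 1
            abel
          have h4 : ⟪p' - p, y' - x₀⟫ ≤ ‖p' - p‖ * r := by
            have := real_inner_le_norm (p' - p) (y' - x₀)
            rw [h] at this
            exact this
          have h5 : ‖p' - p‖ < m / (2 * r) := by
            have : ‖p' - p‖ = dist p p' := by rw [dist_eq_norm, norm_sub_rev]
            rw [this]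
            exact lt_of_lt_of_le hp'dist (min_le_right _ _)
          have h6 : ‖p' - p‖ * r < m / 2 := by
            have := mul_lt_mul_of_pos_right h5 hr0
            have e : m / (2 * r) * r = m / 2 := by field_simp
            linarith [e ▸ this]
          linarith
      have hy'ball : y' ∈ ball x₀ r := mem_ball_iff_norm.2 hy'lt
      have hy'diff : DifferentiableAt ℝ u y' :=
        hNdiff y' ⟨hballN (hrR hy'mem), hy'ne⟩
      have hlocmin : IsLocalMin (fun z => u z - ⟪p', z⟫) y' :=
        hy'min.isLocalMin (Filter.mem_of_superset (isOpen_ball.mem_nhds hy'ball)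
          ball_subset_closedBall)
      have hgeq : gradient u y' = p' := aux_grad_eq_of_localMin hy'diff hlocmin
      refine ⟨p', ?_, lt_of_lt_of_le hp'dist (min_le_left _ _)⟩
      rw [← hgeq]
      exact hu.grad_mem_support y' (hballsupp (hrR hy'mem)) hy'diff
  have hcl : p ∈ closure (msupport ν) := Metric.mem_closure_iff.2 hmain
  rwa [(aux_isClosed_msupport ν).closure_eq] at hcl
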